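/- arXiv:2510.00076 — 3 statements merged into one kernel-verified Lean document; each statement's English description precedes it below -/
import Mathlib

section
/- If a hypothesis class H with finite Littlestone dimension is k-reducible, witnessed by points x_1,...,x_k, then H can be covered by k+1 restriction classes H_1,...,H_{k+1}, each of which has Littlestone dimension strictly less than LDim(H). Specifically, taking H_i = H|_{(x_i, 1 - SOA_H(x_i))} for i ≤ k and H_{k+1} = H|_{(x_1,SOA_H(x_1)),...,(x_k,SOA_H(x_k))}, the union of H_1,...,H_{k+1} equals H and each H_i has LDim(H_i) < LDim(H). -/
open scoped Classical

universe u

variable {X : Type u}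

/-- Restriction of a hypothesis class to hypotheses labelling `x` with `y`. -/
def restrict (H : Set (X → Bool)) (x : X) (y : Bool) : Set (X → Bool) :=
  {h ∈ H | h x = y}

/-- Restriction along a sequence of labelled examples. -/
def restrictSeq (H : Set (X → Bool)) : List (X × Bool) → Set (X → Bool)
  | [] => H
  | (x, y) :: rest => restrictSeq (restrict H x y) rest

/-- `Shatters H d` : `H` shatters a complete mistake tree of depth `d`. -/
def Shatters (H : Set (X → Bool)) : ℕ → Prop
  | 0 => H.Nonempty
  | d + 1 => ∃ x : X, Shatters (restrict H x false) d ∧ Shatters (restrict H x true) d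

/-- The Littlestone dimension, with value `⊥` for the empty class
(the usual `-1` convention) and `⊤` for infinite dimension. -/
noncomputable def LDim (H : Set (X → Bool)) : WithBot ℕ∞ :=
  sSup {e : WithBot ℕ∞ | ∃ n : ℕ, e = ((n : ℕ∞) : WithBot ℕ∞) ∧ Shatters H n}

/-- Littlestone dimension, truncated to a natural number. -/
noncomputable def ldimN (H : Set (X → Bool)) : ℕ :=
  ((LDim H).unbotD 0).toNat

/-- The standard optimal algorithm of a class. -/
noncomputable def SOA (H : Set (X → Bool)) (x : X) : Bool :=
  if LDim (restrict H x false) = LDim H then false else true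

/-- Restricting `H` along points `xs`, each labelled by `SOA H`. -/
noncomputable def soaChain (H : Set (X → Bool)) (xs : List X) : Set (X → Bool) :=
  restrictSeq H (xs.map fun x => (x, SOA H x))

/-- `H` is `k`-irreducible. -/
noncomputable def Irred (k : ℕ) (H : Set (X → Bool)) : Prop :=
  ∀ xs : List X, xs.length = k → LDim (soaChain H xs) = LDim H

/-- `H` is `k`-reducible. -/
noncomputable def Reducible (k : ℕ) (H : Set (X → Bool)) : Prop :=
  ∃ xs : List X, xs.length = k ∧ LDim (soaChain H xs) < LDim H

/-- Binary decomposition trees: internal nodes labelled by domain points. -/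
inductive DTree (X : Type u) : Type u where
  | leaf : DTree X
  | node : X → DTree X → DTree X → DTree X

/-- The example-sequences of all leaves of a tree (below the prefix `pre`). -/
def DTree.leafPaths : DTree X → List (X × Bool) → List (List (X × Bool))
  | .leaf, pre => [pre]
  | .node x l r, pre => l.leafPaths (pre ++ [(x, false)]) ++ r.leafPaths (pre ++ [(x, true)])

/-- The example-sequences of all nodes of a tree (below the prefix `pre`). -/
def DTree.nodePaths : DTree X → List (X × Bool) → List (List (X × Bool))
  | .leaf, pre => [pre]
  | .node x l r, pre =>
      pre :: (l.nodePaths (pre ++ [(x, false)]) ++ r.nodePaths (pre ++ [(x, true)]))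

/-- Validity of a `(p,d)`-decomposition tree of `H`. -/
noncomputable def ValidTree (p d : ℕ) (H : Set (X → Bool)) (t : DTree X) : Prop :=
  (∀ s ∈ t.nodePaths [], s.length ≤ p * (2 ^ (d - ldimN (restrictSeq H s) + 1) - 1)) ∧
  (∀ s ∈ t.leafPaths [], s.length ≤ p * (2 ^ (d - ldimN (restrictSeq H s)) - 1) ∧
    Irred (p * 2 ^ (d - ldimN (restrictSeq H s))) (restrictSeq H s))

/-- The degree of a decomposition tree: the largest leaf Littlestone dimension. -/
noncomputable def degree (H : Set (X → Bool)) (t : DTree X) : ℕ :=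
  ((t.leafPaths []).map fun s => ldimN (restrictSeq H s)).foldr max 0

/-- The `(p,d)`-decomposition dimension of `H`. -/
noncomputable def DDim (p d : ℕ) (H : Set (X → Bool)) : ℕ :=
  sInf {t : ℕ | ∃ tr : DTree X, ValidTree p d H tr ∧ degree H tr = t}

/-- An optimal `(p,d)`-decomposition tree of `H`. -/
noncomputable def OptimalTree (p d : ℕ) (H : Set (X → Bool)) (tr : DTree X) : Prop :=
  ValidTree p d H tr ∧ degree H tr = DDim p d H

/-- `f` is `(p,d)`-essential to `H`: it arises as the `SOA` of a leaf of maximal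
dimension in every optimal `(p,d)`-decomposition of `H`. -/
noncomputable def Essential (p d : ℕ) (H : Set (X → Bool)) (f : X → Bool) : Prop :=
  ∀ tr : DTree X, OptimalTree p d H tr →
    ∃ s ∈ tr.leafPaths [], ldimN (restrictSeq H s) = DDim p d H ∧ SOA (restrictSeq H s) = f

section Aux

lemma restrict_subset (H : Set (X → Bool)) (x : X) (y : Bool) : restrict H x y ⊆ H :=
  fun _ hh => hh.1

lemma restrict_mono {H H' : Set (X → Bool)} (hs : H ⊆ H') (x : X) (y : Bool) :
    restrict H x y ⊆ restrict H' x y := fun h hh => ⟨hs hh.1, hh.2⟩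

lemma shatters_mono {H H' : Set (X → Bool)} (hs : H ⊆ H') :
    ∀ n, Shatters H n → Shatters H' n
  | 0, h => by obtain ⟨f, hf⟩ := h; exact ⟨f, hs hf⟩
  | n + 1, h => by
      obtain ⟨xx, hf, ht⟩ := h
      exact ⟨xx, shatters_mono (restrict_mono hs xx false) n hf,
        shatters_mono (restrict_mono hs xx true) n ht⟩

lemma shatters_of_succ {H : Set (X → Bool)} {n : ℕ} (h : Shatters H (n + 1)) :
    Shatters H n := by
  obtain ⟨xx, hf, _⟩ := h
  exact shatters_mono (restrict_subset H xx false) n hf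

lemma shatters_anti {H : Set (X → Bool)} {m : ℕ} :
    ∀ {n : ℕ}, m ≤ n → Shatters H n → Shatters H m := by
  intro n
  induction n with
  | zero => intro hle hs; simpa [Nat.le_zero.mp hle] using hs
  | succ k ih =>
      intro hle hs
      rcases Nat.eq_or_lt_of_le hle with h | h
      · simpa [h] using hs
      · exact ih (Nat.lt_succ_iff.mp h) (shatters_of_succ hs)

lemma ldim_mono {H H' : Set (X → Bool)} (hs : H ⊆ H') : LDim H ≤ LDim H' := by
  apply sSup_le_sSup
  rintro e ⟨n, rfl, hn⟩
  exact ⟨n, rfl, shatters_mono hs n hn⟩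

lemma shatters_of_ldim_eq {H : Set (X → Bool)} {d : ℕ}
    (h : LDim H = ((d : ℕ∞) : WithBot ℕ∞)) : Shatters H d := by
  by_contra hns
  cases d with
  | zero =>
      have hempty : {e : WithBot ℕ∞ | ∃ n : ℕ, e = ((n : ℕ∞) : WithBot ℕ∞) ∧ Shatters H n}
          = ∅ := by
        ext e
        simp only [Set.mem_setOf_eq, Set.mem_empty_iff_false, iff_false]
        rintro ⟨n, rfl, hsn⟩
        exact hns (shatters_anti (Nat.zero_le n) hsn)
      rw [LDim, hempty, sSup_empty] at h
      simp at h
  | succ m =>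
      have hle : LDim H ≤ ((m : ℕ∞) : WithBot ℕ∞) := by
        apply sSup_le
        rintro e ⟨n, rfl, hsn⟩
        have hn : n ≤ m := by
          by_contra hnm
          exact hns (shatters_anti (Nat.succ_le_of_lt (not_le.mp hnm)) hsn)
        exact_mod_cast hn
      rw [h] at hle
      exact absurd hle (by exact_mod_cast (Nat.lt_succ_self m).not_ge)

lemma ldim_restrict_lt {H : Set (X → Bool)} {d : ℕ}
    (hd : LDim H = ((d : ℕ∞) : WithBot ℕ∞)) (x : X) :
    LDim (restrict H x (!SOA H x)) < LDim H := by
  have hmono : ∀ y, LDim (restrict H x y) ≤ LDim H :=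
    fun y => ldim_mono (restrict_subset H x y)
  have hboth : ¬(LDim (restrict H x false) = LDim H ∧ LDim (restrict H x true) = LDim H) := by
    rintro ⟨hf, ht⟩
    have sf := shatters_of_ldim_eq (hf.trans hd)
    have st := shatters_of_ldim_eq (ht.trans hd)
    have hsh : Shatters H (d + 1) := ⟨x, sf, st⟩
    have hle : (((d + 1 : ℕ) : ℕ∞) : WithBot ℕ∞) ≤ LDim H :=
      le_sSup ⟨d + 1, rfl, hsh⟩
    rw [hd] at hle
    exact absurd hle (by exact_mod_cast (Nat.lt_succ_self d).not_ge)
  unfold SOA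
  split_ifs with hif
  · simp only [Bool.not_false]
    exact lt_of_le_of_ne (hmono true) (fun h => hboth ⟨hif, h⟩)
  · simp only [Bool.not_true]
    exact lt_of_le_of_ne (hmono false) hif

lemma mem_restrictSeq (h : X → Bool) :
    ∀ (l : List (X × Bool)) (H : Set (X → Bool)),
      h ∈ restrictSeq H l ↔ h ∈ H ∧ ∀ p ∈ l, h p.1 = p.2
  | [], H => by simp [restrictSeq]
  | (x, y) :: rest, H => by
      rw [restrictSeq, mem_restrictSeq h rest]
      simp only [restrict, Set.mem_setOf_eq, List.mem_cons, Set.mem_sep_iff]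
      constructor
      · rintro ⟨⟨h1, h2⟩, h3⟩
        refine ⟨h1, ?_⟩
        rintro p (rfl | hp)
        · exact h2
        · exact h3 p hp
      · rintro ⟨h1, h2⟩
        exact ⟨⟨h1, h2 (x, y) (Or.inl rfl)⟩, fun p hp => h2 p (Or.inr hp)⟩

end Aux

/-- if `H` (of finite Littlestone dimension) is `k`-reducible, witnessed by
`x 0, …, x (k-1)`, then the `k+1` restriction classes `H|_{(x i, 1 - SOA_H (x i))}` together
with `H|_{(x 0, SOA_H (x 0)), …, (x (k-1), SOA_H (x (k-1)))}` cover `H`, and each has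
Littlestone dimension strictly smaller than `LDim H`. -/
theorem reducible_cover (H : Set (X → Bool)) (hfin : LDim H ≠ ⊤) (k : ℕ) (x : Fin k → X)
    (hred : LDim (soaChain H (List.ofFn x)) < LDim H) :
    ((⋃ i : Fin k, restrict H (x i) (!SOA H (x i))) ∪ soaChain H (List.ofFn x) = H) ∧
    (∀ i : Fin k, LDim (restrict H (x i) (!SOA H (x i))) < LDim H) ∧
    LDim (soaChain H (List.ofFn x)) < LDim H := by
  have hne_bot : LDim H ≠ ⊥ := ne_bot_of_gt hred
  obtain ⟨d, hd⟩ : ∃ d : ℕ, LDim H = ((d : ℕ∞) : WithBot ℕ∞) := by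
    rcases hL : LDim H with _ | a
    · exact absurd hL hne_bot
    · rcases a with _ | dd
      · exact absurd (by rw [hL]; rfl) hfin
      · exact ⟨dd, rfl⟩
  refine ⟨?_, fun i => ldim_restrict_lt hd (x i), hred⟩
  ext h
  simp only [Set.mem_union, Set.mem_iUnion]
  constructor
  · rintro (⟨i, hi⟩ | hc)
    · exact hi.1
    · exact ((mem_restrictSeq h _ H).1 hc).1
  · intro hh
    by_cases hall : ∀ i, h (x i) = SOA H (x i)
    · right
      rw [soaChain, mem_restrictSeq]
      refine ⟨hh, ?_⟩
      intro p hp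
      simp only [List.mem_map, List.mem_ofFn] at hp
      obtain ⟨z, ⟨i, rfl⟩, rfl⟩ := hp
      exact hall i
    · push_neg at hall
      obtain ⟨i, hi⟩ := hall
      exact Or.inl ⟨i, hh, by cases hs : SOA H (x i) <;> cases hx : h (x i) <;> simp_all⟩
end

section
/- If a hypothesis class H (over any domain) together with all of its finite restriction classes are k-reducible, and LDim(H) = d, then H is finite with |H| ≤ (k+1)^d. -/
open scoped Classical

universe u

variable {X : Type u}

namespace AllRedAux

theorem restrict_mono {H H' : Set (X → Bool)} (h : H ⊆ H') (x : X) (y : Bool) :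
    restrict H x y ⊆ restrict H' x y := fun f hf => ⟨h hf.1, hf.2⟩

theorem restrict_subset (H : Set (X → Bool)) (x : X) (y : Bool) : restrict H x y ⊆ H :=
  fun _ hf => hf.1

theorem shatters_mono : ∀ (n : ℕ) {H H' : Set (X → Bool)}, H ⊆ H' → Shatters H n → Shatters H' n
  | 0, _, _, hs, h => h.mono hs
  | n+1, _, _, hs, ⟨x, h0, h1⟩ =>
      ⟨x, shatters_mono n (restrict_mono hs x false) h0,
        shatters_mono n (restrict_mono hs x true) h1⟩

theorem shatters_succ : ∀ (n : ℕ) {H : Set (X → Bool)}, Shatters H (n+1) → Shatters H n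
  | 0, H, ⟨x, h0, _⟩ => h0.mono (restrict_subset H x false)
  | n+1, _, ⟨x, h0, h1⟩ => ⟨x, shatters_succ n h0, shatters_succ n h1⟩

theorem shatters_anti {H : Set (X → Bool)} {m n : ℕ} (h : m ≤ n) (hs : Shatters H n) :
    Shatters H m := by
  induction h with
  | refl => exact hs
  | step _ ih => exact ih (shatters_succ _ hs)

theorem le_ldim {H : Set (X → Bool)} {n : ℕ} (h : Shatters H n) :
    ((n : ℕ∞) : WithBot ℕ∞) ≤ LDim H :=
  le_sSup ⟨n, rfl, h⟩

theorem ldim_le {H : Set (X → Bool)} {c : WithBot ℕ∞}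
    (h : ∀ n : ℕ, Shatters H n → ((n : ℕ∞) : WithBot ℕ∞) ≤ c) : LDim H ≤ c :=
  sSup_le (fun _ ⟨n, he, hs⟩ => he ▸ h n hs)

theorem ldim_mono {H H' : Set (X → Bool)} (hs : H ⊆ H') : LDim H ≤ LDim H' :=
  ldim_le fun n h => le_ldim (shatters_mono n hs h)

theorem shatters_of_ldim_eq {H : Set (X → Bool)} {n : ℕ}
    (h : LDim H = ((n : ℕ∞) : WithBot ℕ∞)) : Shatters H n := by
  by_contra hn
  have key : ∀ m : ℕ, Shatters H m → m < n := by
    intro m hm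
    by_contra hmn
    exact hn (shatters_anti (Nat.le_of_not_lt hmn) hm)
  cases n with
  | zero =>
    have hb : LDim H ≤ (⊥ : WithBot ℕ∞) :=
      ldim_le fun m hm => absurd (key m hm) (Nat.not_lt_zero m)
    rw [h] at hb
    exact absurd (le_bot_iff.mp hb) (by exact_mod_cast WithBot.coe_ne_bot)
  | succ n =>
    have hb : LDim H ≤ ((n : ℕ∞) : WithBot ℕ∞) := by
      refine ldim_le fun m hm => ?_
      have := Nat.le_of_lt_succ (key m hm)
      exact_mod_cast this
    rw [h] at hb
    have : n + 1 ≤ n := by exact_mod_cast hb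
    omega

theorem ldim_flip {H : Set (X → Bool)} {n : ℕ}
    (h : LDim H = ((n : ℕ∞) : WithBot ℕ∞)) (x : X) :
    LDim (restrict H x (!SOA H x)) < LDim H := by
  unfold SOA
  by_cases hf : LDim (restrict H x false) = LDim H
  · simp only [hf, if_pos, Bool.not_false]
    rcases lt_or_eq_of_le (ldim_mono (restrict_subset H x true)) with hlt | heq
    · exact hlt
    · exfalso
      have h0 : Shatters (restrict H x false) n := shatters_of_ldim_eq (hf.trans h)
      have h1 : Shatters (restrict H x true) n := shatters_of_ldim_eq (heq.trans h)
      have hsh : Shatters H (n + 1) := ⟨x, h0, h1⟩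
      have := le_ldim hsh
      rw [h] at this
      have : n + 1 ≤ n := by exact_mod_cast this
      omega
  · simp only [hf, if_neg, Bool.not_true]
    exact lt_of_le_of_ne (ldim_mono (restrict_subset H x false)) hf

theorem restrictSeq_subset : ∀ (l : List (X × Bool)) (H : Set (X → Bool)),
    restrictSeq H l ⊆ H
  | [], _ => subset_rfl
  | (x, y) :: l, H => (restrictSeq_subset l _).trans (restrict_subset H x y)

theorem restrictSeq_append : ∀ (l l' : List (X × Bool)) (H : Set (X → Bool)),
    restrictSeq H (l ++ l') = restrictSeq (restrictSeq H l) l'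
  | [], _, _ => rfl
  | (x, y) :: l, l', H => restrictSeq_append l l' (restrict H x y)

theorem subsingleton_of_ldim_lt_one {H : Set (X → Bool)}
    (h : LDim H < (1 : WithBot ℕ∞)) : H.Subsingleton := by
  intro f hf g hg
  by_contra hfg
  obtain ⟨x, hx⟩ : ∃ x, f x ≠ g x := by
    by_contra hc; push_neg at hc; exact hfg (funext hc)
  have hsh : Shatters H 1 := by
    cases hfx : f x with
    | false =>
      have hgx : g x = true := by cases hgx : g x <;> simp_all
      exact ⟨x, ⟨f, hf, hfx⟩, ⟨g, hg, hgx⟩⟩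
    | true =>
      have hgx : g x = false := by cases hgx : g x <;> simp_all
      exact ⟨x, ⟨g, hg, hgx⟩, ⟨f, hf, hfx⟩⟩
  have := le_ldim hsh
  have h1 : (((1 : ℕ) : ℕ∞) : WithBot ℕ∞) = (1 : WithBot ℕ∞) := by norm_cast
  rw [h1] at this
  exact absurd (lt_of_le_of_lt this h) (lt_irrefl _)

/-- The flipped-label cover lists. -/
def coverList (f : X → Bool) : List X → List (List (X × Bool))
  | [] => []
  | x :: rest => [(x, !f x)] :: (coverList f rest).map (fun l => (x, f x) :: l)

theorem coverList_length (f : X → Bool) : ∀ xs : List X, (coverList f xs).length = xs.length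
  | [] => rfl
  | _ :: rest => by simp [coverList, coverList_length f rest]

theorem cover_mem (f : X → Bool) :
    ∀ (xs : List X) (H : Set (X → Bool)) (h : X → Bool), h ∈ H →
      h ∈ restrictSeq H (xs.map fun x => (x, f x)) ∨ ∃ l ∈ coverList f xs, h ∈ restrictSeq H l
  | [], _, _, hh => Or.inl hh
  | x :: rest, H, h, hh => by
      by_cases hx : h x = f x
      · rcases cover_mem f rest (restrict H x (f x)) h ⟨hh, hx⟩ with h1 | ⟨l, hl, h2⟩
        · exact Or.inl h1
        · exact Or.inr ⟨(x, f x) :: l, List.mem_cons_of_mem _ (List.mem_map_of_mem hl), h2⟩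
      · have hx' : h x = !f x := by cases hfx : f x <;> simp_all
        exact Or.inr ⟨[(x, !f x)], List.mem_cons_self, ⟨hh, hx'⟩⟩

theorem cover_flip (f : X → Bool) :
    ∀ (xs : List X) (H : Set (X → Bool)), ∀ l ∈ coverList f xs,
      ∃ x, restrictSeq H l ⊆ restrict H x (!f x)
  | [], _, l, hl => absurd hl List.not_mem_nil
  | x :: rest, H, l, hl => by
      rcases List.mem_cons.mp hl with rfl | hl'
      · exact ⟨x, subset_rfl⟩
      · obtain ⟨l2, hl2, rfl⟩ := List.mem_map.mp hl'
        obtain ⟨x', hsub⟩ := cover_flip f rest (restrict H x (f x)) l2 hl2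
        exact ⟨x', hsub.trans (restrict_mono (restrict_subset H x (f x)) x' (!f x'))⟩

theorem listUnion_bound {α : Type*} (m : ℕ) :
    ∀ L : List (Set α), (∀ s ∈ L, s.Finite ∧ s.ncard ≤ m) →
      (L.foldr (· ∪ ·) ∅).Finite ∧ (L.foldr (· ∪ ·) ∅).ncard ≤ L.length * m
  | [], _ => ⟨Set.finite_empty, by simp⟩
  | s :: L, hL => by
      obtain ⟨hsf, hsc⟩ := hL s List.mem_cons_self
      obtain ⟨hUf, hUc⟩ := listUnion_bound m L (fun t ht => hL t (List.mem_cons_of_mem _ ht))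
      refine ⟨hsf.union hUf, ?_⟩
      calc (s ∪ L.foldr (· ∪ ·) ∅).ncard ≤ s.ncard + (L.foldr (· ∪ ·) ∅).ncard :=
            Set.ncard_union_le _ _
        _ ≤ m + L.length * m := Nat.add_le_add hsc hUc
        _ = (s :: L).length * m := by simp [List.length_cons]; ring

theorem mem_listUnion {α : Type*} {h : α} :
    ∀ (L : List (Set α)) (s : Set α), s ∈ L → h ∈ s → h ∈ L.foldr (· ∪ ·) ∅
  | [], _, hs, _ => absurd hs List.not_mem_nil
  | t :: L, s, hs, hh => by
      rcases List.mem_cons.mp hs with rfl | hs'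
      · exact Or.inl hh
      · exact Or.inr (mem_listUnion L s hs' hh)

theorem exists_nat_of_le {a : WithBot ℕ∞} {m : ℕ} (h1 : a ≠ ⊥)
    (h2 : a ≤ ((m : ℕ∞) : WithBot ℕ∞)) : ∃ n : ℕ, a = ((n : ℕ∞) : WithBot ℕ∞) := by
  induction a using WithBot.recBotCoe with
  | bot => exact absurd rfl h1
  | coe e =>
    induction e using WithTop.recTopCoe with
    | top =>
      exfalso
      have : (⊤ : ℕ∞) ≤ (m : ℕ∞) := WithBot.coe_le_coe.mp h2
      simp at this
    | coe n => exact ⟨n, rfl⟩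

theorem le_of_lt_succ {a : WithBot ℕ∞} {d : ℕ}
    (h : a < (((d + 1 : ℕ) : ℕ∞) : WithBot ℕ∞)) : a ≤ ((d : ℕ∞) : WithBot ℕ∞) := by
  induction a using WithBot.recBotCoe with
  | bot => exact bot_le
  | coe e =>
    induction e using WithTop.recTopCoe with
    | top =>
      exfalso
      have : (⊤ : ℕ∞) < ((d + 1 : ℕ) : ℕ∞) := WithBot.coe_lt_coe.mp h
      simp at this
    | coe n =>
      have h2 : (n : ℕ∞) < ((d + 1 : ℕ) : ℕ∞) := WithBot.coe_lt_coe.mp h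
      have h3 : n < d + 1 := Nat.cast_lt.mp h2
      exact WithBot.coe_le_coe.mpr (Nat.cast_le.mpr (Nat.le_of_lt_succ h3))

theorem aux (k : ℕ) : ∀ (d : ℕ) (H : Set (X → Bool)),
    LDim H ≤ ((d : ℕ∞) : WithBot ℕ∞) →
    (∀ l : List (X × Bool), 1 ≤ LDim (restrictSeq H l) → Reducible k (restrictSeq H l)) →
    H.Finite ∧ H.ncard ≤ (k + 1) ^ d := by
  intro d
  induction d with
  | zero =>
    intro H hle _
    have hlt : LDim H < (1 : WithBot ℕ∞) := by
      refine lt_of_le_of_lt hle ?_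
      exact_mod_cast (by norm_num : ((0 : ℕ∞) : WithBot ℕ∞) < ((1 : ℕ∞) : WithBot ℕ∞))
    have hss := subsingleton_of_ldim_lt_one hlt
    rcases hss.eq_empty_or_singleton with rfl | ⟨a, rfl⟩
    · simp
    · simp
  | succ d ih =>
    intro H hle hred
    by_cases h1 : (1 : WithBot ℕ∞) ≤ LDim H
    · obtain ⟨n, hn⟩ : ∃ n : ℕ, LDim H = ((n : ℕ∞) : WithBot ℕ∞) :=
        exists_nat_of_le (fun hb => by rw [hb] at h1; exact absurd h1 (by simp)) hle
      obtain ⟨xs, hlen, hlt⟩ := hred [] h1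
      -- the cover lists
      set f : X → Bool := SOA H with hf
      have hchain : LDim (restrictSeq H (xs.map fun x => (x, f x))) ≤ ((d : ℕ∞) : WithBot ℕ∞) :=
        le_of_lt_succ (lt_of_lt_of_le hlt hle)
      have hredtrans : ∀ l : List (X × Bool),
          (∀ l' : List (X × Bool), 1 ≤ LDim (restrictSeq (restrictSeq H l) l') →
            Reducible k (restrictSeq (restrictSeq H l) l')) := by
        intro l l' hl'
        rw [← restrictSeq_append] at hl' ⊢
        exact hred (l ++ l') hl'
      have hcov : ∀ l ∈ coverList f xs,
          LDim (restrictSeq H l) ≤ ((d : ℕ∞) : WithBot ℕ∞) := by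
        intro l hl
        obtain ⟨x, hsub⟩ := cover_flip f xs H l hl
        refine le_of_lt_succ (lt_of_lt_of_le (lt_of_le_of_lt (ldim_mono hsub) ?_) hle)
        exact ldim_flip hn x
      -- each class in the family is small by induction
      set L : List (Set (X → Bool)) :=
        ((xs.map fun x => (x, f x)) :: coverList f xs).map (restrictSeq H) with hL
      have hsmall : ∀ s ∈ L, s.Finite ∧ s.ncard ≤ (k + 1) ^ d := by
        intro s hs
        obtain ⟨l, hl, rfl⟩ := List.mem_map.mp hs
        rcases List.mem_cons.mp hl with rfl | hl'
        · exact ih _ hchain (hredtrans _)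
        · exact ih _ (hcov l hl') (hredtrans _)
      obtain ⟨hUf, hUc⟩ := listUnion_bound ((k + 1) ^ d) L hsmall
      have hsubU : H ⊆ L.foldr (· ∪ ·) ∅ := by
        intro h hh
        rcases cover_mem f xs H h hh with hmem | ⟨l, hl, hmem⟩
        · exact mem_listUnion L _ (List.mem_map_of_mem List.mem_cons_self) hmem
        · exact mem_listUnion L _
            (List.mem_map_of_mem (List.mem_cons_of_mem _ hl)) hmem
      have hLlen : L.length = k + 1 := by
        simp [hL, coverList_length, hlen]
      refine ⟨hUf.subset hsubU, ?_⟩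
      calc H.ncard ≤ (L.foldr (· ∪ ·) ∅).ncard := Set.ncard_le_ncard hsubU hUf
        _ ≤ L.length * (k + 1) ^ d := hUc
        _ = (k + 1) ^ (d + 1) := by rw [hLlen]; ring
    · have hlt : LDim H < (1 : WithBot ℕ∞) := not_le.mp h1
      have hss := subsingleton_of_ldim_lt_one hlt
      have hone : 1 ≤ (k + 1) ^ (d + 1) := Nat.one_le_pow _ _ (Nat.succ_pos k)
      rcases hss.eq_empty_or_singleton with rfl | ⟨a, rfl⟩
      · simpa using Nat.zero_le _
      · simpa using hone

end AllRedAux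

/-- if `H` together with all of its restriction classes (of positive
Littlestone dimension, where reducibility is meaningful) are `k`-reducible, and
`LDim H = d`, then `H` is finite with at most `(k+1)^d` elements. -/
theorem all_reducible_finite (H : Set (X → Bool)) (k d : ℕ)
    (hd : LDim H = ((d : ℕ∞) : WithBot ℕ∞))
    (hred : ∀ l : List (X × Bool),
      1 ≤ LDim (restrictSeq H l) → Reducible k (restrictSeq H l)) :
    H.Finite ∧ H.ncard ≤ (k + 1) ^ d := by
  exact AllRedAux.aux k d H (le_of_eq hd) hred
end

section
/- Let D and D' be probability distributions obtained by the sparse exponential mechanism over candidate sets C ∪ {⊥} and C' ∪ {⊥} respectively, with the same score function and the same score for ⊥, where C' ⊆ C and every removed candidate in C \ C' had D-probability mass totaling at least (1/5)·(1 − Pr_D[⊥]). If additionally Pr_D[⊥] ≤ 1/100, then Pr_{D'}[⊥] ≥ (1 + 1/10)·Pr_D[⊥]. -/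
/-- let `D`, `D'` be the output distributions of the sparse exponential
mechanism (output `v` with probability `exp(ε·score v)` normalized) over `C ∪ {⊥}` and
`C' ∪ {⊥}` with the same scores, where `C' ⊆ C`. If the candidates removed from `C` carried
`D`-probability mass at least `(1/5)·(1 − Pr_D[⊥])`, and `Pr_D[⊥] ≤ 1/100`, then
`Pr_{D'}[⊥] ≥ (1 + 1/10)·Pr_D[⊥]`. -/
theorem sparse_sample_bot_increase {α : Type*} [DecidableEq α]
    (C C' : Finset α) (hsub : C' ⊆ C) (score : α → ℝ) (sbot ε : ℝ)
    (hrem : 1 / 5 * (1 - Real.exp (ε * sbot)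
          / (Real.exp (ε * sbot) + ∑ u ∈ C, Real.exp (ε * score u)))
        ≤ (∑ u ∈ C \ C', Real.exp (ε * score u))
          / (Real.exp (ε * sbot) + ∑ u ∈ C, Real.exp (ε * score u)))
    (hp : Real.exp (ε * sbot)
          / (Real.exp (ε * sbot) + ∑ u ∈ C, Real.exp (ε * score u)) ≤ 1 / 100) :
    (1 + 1 / 10) * (Real.exp (ε * sbot)
          / (Real.exp (ε * sbot) + ∑ u ∈ C, Real.exp (ε * score u)))
      ≤ Real.exp (ε * sbot)
          / (Real.exp (ε * sbot) + ∑ u ∈ C', Real.exp (ε * score u)) := by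
  set e := Real.exp (ε * sbot) with he
  set S := ∑ u ∈ C, Real.exp (ε * score u) with hS
  set S' := ∑ u ∈ C', Real.exp (ε * score u) with hS'
  set R := ∑ u ∈ C \ C', Real.exp (ε * score u) with hR
  have hsplit : R + S' = S := Finset.sum_sdiff hsub
  have hepos : 0 < e := Real.exp_pos _
  have hS'nn : 0 ≤ S' := Finset.sum_nonneg fun u _ => (Real.exp_pos _).le
  have hRnn : 0 ≤ R := Finset.sum_nonneg fun u _ => (Real.exp_pos _).le
  have hZpos : 0 < e + S := by nlinarith
  have hZ'pos : 0 < e + S' := by nlinarith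
  have hrem' : 1 / 5 * ((e + S) - e) ≤ R := by
    have h1 : 1 / 5 * (1 - e / (e + S)) * (e + S) ≤ R / (e + S) * (e + S) := by
      exact mul_le_mul_of_nonneg_right hrem hZpos.le
    rw [div_mul_cancel₀ _ hZpos.ne'] at h1
    have h2 : 1 / 5 * (1 - e / (e + S)) * (e + S) = 1 / 5 * ((e + S) - e) := by
      field_simp
    linarith
  have hp' : e ≤ 1 / 100 * (e + S) := by
    have := (div_le_iff₀ hZpos).mp hp
    linarith
  have key : (1 + 1 / 10) * (e / (e + S)) = (1 + 1 / 10) * e / (e + S) := by ring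
  rw [key, div_le_div_iff₀ hZpos hZ'pos]
  nlinarith [mul_pos hepos hZpos, mul_pos hepos hZ'pos, mul_le_mul_of_nonneg_left hrem' hepos.le, mul_le_mul_of_nonneg_left hp' hepos.le]
end
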